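/- Let f be an odd positive integer, χ a Dirichlet character modulo f, m ≥ 0 and n ≥ 1 integers, and q real with 0 < q < 1. With E_{m,χ,q}(x) = (2/(1-q)^m) Σ_{l=0}^m C(m,l)(-1)^l q^{lx} Σ_{a=0}^{f-1} χ(a)(-1)^a q^{la}/(1+q^{lf}) and E_{m,χ,q} = E_{m,χ,q}(0), one has E_{m,χ,q}(nf) - (-1)^n E_{m,χ,q} = 2 Σ_{l=0}^{nf-1} (-1)^{n-1-l} χ(l) [l]_q^m. -/

import Mathlib

open Finset

/-- The `q`-analogue `[y]_q = (1 - q^y)/(1 - q)` (real power). -/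
noncomputable def qnum (q y : ℝ) : ℝ := (1 - q ^ y) / (1 - q)

/-- The generalized `q`-Euler polynomial attached to a Dirichlet character `χ` mod `f`:
`E_{m,χ,q}(x) = (2/(1-q)^m) Σ_{l=0}^m C(m,l)(-1)^l q^{lx} Σ_{a=0}^{f-1} χ(a)(-1)^a q^{la}/(1+q^{lf})`. -/
noncomputable def qEulerChi (f : ℕ) (χ : DirichletCharacter ℂ f) (m : ℕ) (q x : ℝ) : ℂ :=
  2 / ((1 : ℂ) - (q : ℂ)) ^ m *
    ∑ l ∈ range (m + 1), (m.choose l : ℂ) * (-1) ^ l * ((q ^ ((l : ℝ) * x) : ℝ) : ℂ) *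
      ∑ a ∈ range f, χ (a : ZMod f) * (-1) ^ a * (q : ℂ) ^ (l * a) /
        (((1 + q ^ (l * f) : ℝ)) : ℂ)

/-! Put `r = q^l`. Since `(r^f)^n - (-1)^n = -(-1)^n (1 + r^f) Σ_{j<n} (-1)^j r^{fj}`, the
denominator `1 + q^{lf}` cancels from the `l`-th term of `E(nf) - (-1)^n E`, and because `χ` has
period `f` with `f` odd, `Σ_{j<n} (-1)^j r^{fj} · Σ_{a<f} χ(a) (-1)^a r^a = Σ_{k<nf} χ(k) (-1)^k r^k`.
Expanding `[k]_q^m = (1 - q^k)^m / (1 - q)^m` binomially turns the right-hand side into the same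
double sum over `l` and `k`. -/

theorem sum_range_mul_eq_sum_sum {M : Type*} [AddCommMonoid M] (g : ℕ → M) (n f : ℕ) :
    ∑ k ∈ range (n * f), g k = ∑ j ∈ range n, ∑ a ∈ range f, g (j * f + a) := by
  induction n with
  | zero => simp
  | succ n ih => rw [add_one_mul, sum_range_add, ih, sum_range_succ]

theorem sum_range_mul_periodic_neg_one_pow_mul_pow {R : Type*} [CommRing R] {f : ℕ} (hf : Odd f)
    (ψ : ZMod f → R) (n : ℕ) (r : R) :
    ∑ k ∈ range (n * f), ψ k * (-1) ^ k * r ^ k =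
      (∑ j ∈ range n, (-1) ^ j * (r ^ f) ^ j) * ∑ a ∈ range f, ψ a * (-1) ^ a * r ^ a := by
  rw [sum_range_mul_eq_sum_sum, sum_mul]
  refine sum_congr rfl fun j _ => ?_
  rw [mul_sum]
  refine sum_congr rfl fun a _ => ?_
  have hψ : ψ ((j * f + a : ℕ) : ZMod f) = ψ a := by simp
  have hsign : (-1 : R) ^ (j * f + a) = (-1) ^ j * (-1) ^ a := by
    rw [pow_add, mul_comm j f, pow_mul, hf.neg_one_pow]
  rw [hψ, hsign, pow_add, ← pow_mul, mul_comm f j]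
  ring

theorem pow_sub_neg_one_pow_eq {R : Type*} [CommRing R] (y : R) (n : ℕ) :
    y ^ n - (-1) ^ n = -(-1) ^ n * ((1 + y) * ∑ j ∈ range n, (-1) ^ j * y ^ j) := by
  have hgeom := geom_sum_mul (-y) n
  simp only [neg_pow y] at hgeom
  have hsq : ((-1 : R) ^ n) * (-1) ^ n = 1 := by rw [← mul_pow]; norm_num
  linear_combination (-(-1 : R) ^ n) * hgeom - y ^ n * hsq

theorem neg_one_zpow_natCast_sub_one_sub {K : Type*} [DivisionRing K] (n k : ℕ) :
    (-1 : K) ^ ((n : ℤ) - 1 - k) = -(-1) ^ n * (-1) ^ k := by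
  rw [zpow_sub₀ (by norm_num), zpow_sub₀ (by norm_num)]
  simp [div_eq_mul_inv, ← inv_pow]

theorem one_sub_pow_eq_sum {R : Type*} [CommRing R] (x : R) (m : ℕ) :
    (1 - x) ^ m = ∑ l ∈ range (m + 1), (m.choose l : R) * (-1) ^ l * x ^ l := by
  rw [sub_eq_neg_add, add_pow]
  refine sum_congr rfl fun l _ => ?_
  rw [neg_pow]
  ring

theorem qnum_natCast_pow (q : ℝ) (k m : ℕ) :
    ((qnum q k ^ m : ℝ) : ℂ) = (1 - (q : ℂ) ^ k) ^ m / (1 - q) ^ m := by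
  simp [qnum, Real.rpow_natCast, div_pow]

theorem qEulerChi_natCast (f : ℕ) (χ : DirichletCharacter ℂ f) (m : ℕ) (q : ℝ) (x : ℕ) :
    qEulerChi f χ m q x = 2 / (1 - q) ^ m * ∑ l ∈ range (m + 1),
      (m.choose l : ℂ) * (-1) ^ l * ((q : ℂ) ^ l) ^ x *
        (∑ a ∈ range f, χ a * (-1) ^ a * ((q : ℂ) ^ l) ^ a) / (1 + ((q : ℂ) ^ l) ^ f) := by
  unfold qEulerChi
  congr 1
  refine sum_congr rfl fun l _ => ?_
  rw [← Nat.cast_mul, Real.rpow_natCast, ← sum_div, mul_div_assoc]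
  push_cast
  simp only [pow_mul]

theorem qEulerChi_sub_neg_one_pow_mul {f : ℕ} (hf : Odd f) (χ : DirichletCharacter ℂ f)
    (m n : ℕ) {q : ℝ} (hq : 0 < q) :
    qEulerChi f χ m q ((n * f : ℕ) : ℝ) - (-1) ^ n * qEulerChi f χ m q 0 =
      2 / (1 - q) ^ m * ∑ l ∈ range (m + 1), (m.choose l : ℂ) * (-1) ^ l *
        (-(-1) ^ n * ∑ k ∈ range (n * f), χ k * (-1) ^ k * ((q : ℂ) ^ l) ^ k) := by
  rw [← Nat.cast_zero, qEulerChi_natCast, qEulerChi_natCast, mul_left_comm, ← mul_sub, mul_sum,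
    ← sum_sub_distrib]
  congr 1
  refine sum_congr rfl fun l _ => ?_
  set r : ℂ := (q : ℂ) ^ l
  have hD : 1 + r ^ f ≠ 0 := by
    have : (0 : ℝ) < 1 + (q ^ l) ^ f := by positivity
    simp only [r]
    exact_mod_cast this.ne'
  calc _ = (m.choose l : ℂ) * (-1) ^ l * (((r ^ f) ^ n - (-1) ^ n) *
        ∑ a ∈ range f, χ a * (-1) ^ a * r ^ a) / (1 + r ^ f) := by ring
    _ = _ := by
      rw [pow_sub_neg_one_pow_eq, sum_range_mul_periodic_neg_one_pow_mul_pow hf]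
      field_simp

theorem two_mul_sum_neg_one_zpow_mul_qnum_pow {f : ℕ} (ψ : ZMod f → ℂ) (m n N : ℕ) (q : ℝ) :
    2 * ∑ k ∈ range N, (-1 : ℂ) ^ ((n : ℤ) - 1 - (k : ℤ)) * ψ k * ((qnum q k ^ m : ℝ) : ℂ) =
      2 / (1 - q) ^ m * ∑ l ∈ range (m + 1), (m.choose l : ℂ) * (-1) ^ l *
        (-(-1) ^ n * ∑ k ∈ range N, ψ k * (-1) ^ k * ((q : ℂ) ^ l) ^ k) := by
  simp only [neg_one_zpow_natCast_sub_one_sub, qnum_natCast_pow, one_sub_pow_eq_sum, mul_sum,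
    sum_div]
  rw [sum_comm]
  refine sum_congr rfl fun l _ => sum_congr rfl fun k _ => ?_
  rw [pow_right_comm]
  ring

theorem stmt_3_general (f : ℕ) (hfodd : Odd f) (χ : DirichletCharacter ℂ f)
    (m n : ℕ) (q : ℝ) (hq0 : 0 < q) :
    qEulerChi f χ m q ((n * f : ℕ) : ℝ) - (-1) ^ n * qEulerChi f χ m q 0 =
      2 * ∑ l ∈ range (n * f),
        (-1 : ℂ) ^ ((n : ℤ) - 1 - (l : ℤ)) * χ (l : ZMod f) * ((qnum q l ^ m : ℝ) : ℂ) := by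
  rw [qEulerChi_sub_neg_one_pow_mul hfodd χ m n hq0, two_mul_sum_neg_one_zpow_mul_qnum_pow]

theorem stmt_3 (f : ℕ) (hf : 0 < f) (hfodd : Odd f) (χ : DirichletCharacter ℂ f)
    (m n : ℕ) (hn : 1 ≤ n) (q : ℝ) (hq0 : 0 < q) (hq1 : q < 1) :
    qEulerChi f χ m q ((n * f : ℕ) : ℝ) - (-1) ^ n * qEulerChi f χ m q 0 =
      2 * ∑ l ∈ range (n * f),
        (-1 : ℂ) ^ ((n : ℤ) - 1 - (l : ℤ)) * χ (l : ZMod f) * ((qnum q l ^ m : ℝ) : ℂ) :=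
  stmt_3_general f hfodd χ m n q hq0
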